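/- For a tiled matrix of size p × q with p ≥ q ≥ 1, the critical path length of the tiled Fibonacci algorithm (with TT kernels) is at most 22q + 6⌈√(2p)⌉. -/

import Mathlib

namespace TiledQR

/-- An elimination `elim(i, piv, k)`: tile `(i, k)` is zeroed out by an orthogonal
transformation combining row `i` with pivot row `piv`. -/
structure Elim where
  i : ℕ
  piv : ℕ
  k : ℕ
deriving DecidableEq

/-- `Before L e f` : the elimination `e` occurs strictly before `f` in the list `L`. -/
def Before (L : List Elim) (e f : Elim) : Prop :=
  ∃ a b : Fin L.length, (a : ℕ) < b ∧ L.get a = e ∧ L.get b = f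

/-- `L` is a valid elimination list for a `p × q` tiled matrix: it contains exactly one
elimination for every sub-diagonal tile `(i, k)` (`1 ≤ k ≤ min p q`, `k < i ≤ p`);
every elimination `elim(i, piv, k)` comes after all eliminations `elim(i, *, k')` and
`elim(piv, *, k')` with `k' < k`, and before the elimination `elim(piv, *, k)` of its
pivot row. -/
def ValidElimList (p q : ℕ) (L : List Elim) : Prop :=
  L.Nodup ∧
  (∀ e ∈ L, 1 ≤ e.k ∧ e.k ≤ min p q ∧ e.k < e.i ∧ e.i ≤ p ∧
      1 ≤ e.piv ∧ e.piv ≤ p ∧ e.piv ≠ e.i) ∧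
  (∀ i k, 1 ≤ k → k ≤ min p q → k < i → i ≤ p → ∃! piv, Elim.mk i piv k ∈ L) ∧
  (∀ a b : Fin L.length, (L.get b).k < (L.get a).k →
      ((L.get b).i = (L.get a).i ∨ (L.get b).i = (L.get a).piv) → (b : ℕ) < a) ∧
  (∀ a b : Fin L.length, (L.get b).k = (L.get a).k →
      (L.get b).i = (L.get a).piv → (a : ℕ) < b)

/-- The tasks of the tiled QR factorization with TT (triangle-on-top-of-triangle)
kernels. -/
inductive Task where
  | GEQRT (r k : ℕ)
  | UNMQR (r k j : ℕ)
  | TTQRT (i piv k : ℕ)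
  | TTMQR (i piv k j : ℕ)
deriving DecidableEq

/-- Weights of the TT kernels, the unit being `n_b ^ 3 / 3` flops. -/
def weight : Task → ℕ
  | .GEQRT _ _ => 4
  | .UNMQR _ _ _ => 6
  | .TTQRT _ _ _ => 2
  | .TTMQR _ _ _ _ => 6

/-- The tasks associated with a `p × q` tiled matrix and an elimination list `L`:
a factorization `GEQRT(r, k)` and updates `UNMQR(r, k, j)` (`k < j ≤ q`) for every tile
`(r, k)` with `k ≤ r ≤ p`, and, for every elimination `elim(i, piv, k)` of `L`, a task
`TTQRT(i, piv, k)` and updates `TTMQR(i, piv, k, j)` for `k < j ≤ q`. -/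
def InTasks (p q : ℕ) (L : List Elim) : Task → Prop
  | .GEQRT r k => 1 ≤ k ∧ k ≤ min p q ∧ k ≤ r ∧ r ≤ p
  | .UNMQR r k j => 1 ≤ k ∧ k ≤ min p q ∧ k ≤ r ∧ r ≤ p ∧ k < j ∧ j ≤ q
  | .TTQRT i piv k => Elim.mk i piv k ∈ L
  | .TTMQR i piv k j => Elim.mk i piv k ∈ L ∧ k < j ∧ j ≤ q

/-- The precedence (dependence) relation between the TT tasks.  Besides the flow
dependencies of the kernels, two tasks reading and writing a common tile
(a pivot tile reused by several eliminations of a column, or a pivot tile that is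
subsequently zeroed out) are serialized in the order of the elimination list. -/
inductive Prec (L : List Elim) : Task → Task → Prop
  | geqrt_unmqr (r k j : ℕ) :
      Prec L (.GEQRT r k) (.UNMQR r k j)
  | geqrt_ttqrt_row (i piv k : ℕ) :
      Prec L (.GEQRT i k) (.TTQRT i piv k)
  | geqrt_ttqrt_piv (i piv k : ℕ) :
      Prec L (.GEQRT piv k) (.TTQRT i piv k)
  | ttqrt_ttmqr (i piv k j : ℕ) :
      Prec L (.TTQRT i piv k) (.TTMQR i piv k j)
  | unmqr_ttmqr_row (i piv k j : ℕ) :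
      Prec L (.UNMQR i k j) (.TTMQR i piv k j)
  | unmqr_ttmqr_piv (i piv k j : ℕ) :
      Prec L (.UNMQR piv k j) (.TTMQR i piv k j)
  | ttmqr_geqrt (a b i k : ℕ) : 2 ≤ k → (a = i ∨ b = i) →
      Prec L (.TTMQR a b (k - 1) k) (.GEQRT i k)
  | ttqrt_serial (i i' piv k : ℕ) :
      Before L (Elim.mk i piv k) (Elim.mk i' piv k) →
      Prec L (.TTQRT i piv k) (.TTQRT i' piv k)
  | ttmqr_serial (i i' piv k j : ℕ) :
      Before L (Elim.mk i piv k) (Elim.mk i' piv k) →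
      Prec L (.TTMQR i piv k j) (.TTMQR i' piv k j)
  | ttqrt_pivot_use (a i piv k : ℕ) :
      Prec L (.TTQRT a i k) (.TTQRT i piv k)
  | ttmqr_pivot_use (a i piv k j : ℕ) :
      Prec L (.TTMQR a i k j) (.TTMQR i piv k j)

/-- A path in the weighted task DAG. -/
def IsPath (p q : ℕ) (L : List Elim) (path : List Task) : Prop :=
  (∀ t ∈ path, InTasks p q L t) ∧ path.Chain' (Prec L)

/-- The critical path length of the tiled algorithm given by the elimination list `L`:
the maximum total weight of a path in the weighted task DAG (equivalently, the makespan
of the earliest-start schedule with unboundedly many processors). -/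
noncomputable def cpLength (p q : ℕ) (L : List Elim) : ℕ :=
  sSup { w : ℕ | ∃ path : List Task, IsPath p q L path ∧ w = (path.map weight).sum }
/-- The least positive integer `x` such that `x * (x + 1) / 2 ≥ p - 1`. -/
noncomputable def fibX (p : ℕ) : ℕ := sInf {x : ℕ | 1 ≤ x ∧ p - 1 ≤ x * (x + 1) / 2}

/-- The least positive integer `y` such that `i ≤ y * (y + 1) / 2 + 1`. -/
noncomputable def fibY (i : ℕ) : ℕ := sInf {y : ℕ | 1 ≤ y ∧ i ≤ y * (y + 1) / 2 + 1}

/-- The coarse time step at which the Fibonacci scheme zeroes out tile `(i, k)`: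
`coarse(i, 1) = x - y + 1` and `coarse(i, k) = coarse(i - 1, k - 1) + 2`. -/
noncomputable def fibCoarse (p i k : ℕ) : ℕ :=
  (fibX p - fibY (i - k + 1) + 1) + 2 * (k - 1)

/-- The number of tiles of column `k` zeroed out at the same coarse step as `(i, k)`. -/
noncomputable def fibZ (p i k : ℕ) : ℕ :=
  ((Finset.Icc (k + 1) p).filter fun i' => fibCoarse p i' k = fibCoarse p i k).card

/-- Fibonacci pivot: a bunch of `z` tiles zeroed out at the same step use the `z` rows
just above them, paired in the natural order. -/
noncomputable def fibPiv (p i k : ℕ) : ℕ := i - fibZ p i k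

/-- The elimination list of the tiled Fibonacci algorithm: eliminations are listed by
increasing coarse step and, within a step, by increasing row index. -/
noncomputable def fibList (p q : ℕ) : List Elim :=
  (List.range' 1 (fibX p + 2 * q)).flatMap fun s =>
    (List.range' 1 p).flatMap fun i =>
      (List.range' 1 (min p q)).filterMap fun k =>
        if k < i ∧ fibCoarse p i k = s then some (Elim.mk i (fibPiv p i k) k) else none

/-!
Every task gets a bound on its finishing time in the earliest-start schedule: the TT kernels
of an elimination `elim(i, piv, k)` finish by `6 coarse(i, k) + 10 k + 12`, and the kernels
of tile `(r, k)`, `k ≥ 2`, by `6 coarse(r, k - 1) + 10 k + 12`. The bound is compatible with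
every dependency because the Fibonacci scheme only combines rows that were last touched at
strictly earlier coarse steps: a row and its pivot are updated in column `k - 1` before step
`coarse(i, k)`, a pivot row is zeroed out after it served as a pivot, and the eliminations
sharing a pivot lie in different coarse steps. Since `coarse(i, k) ≤ x + 2 (k - 1)`, every
path weighs at most `22 q + 6 x`, and `x ≤ ⌈√(2p)⌉` because `x (x + 1) / 2 ≥ p - 1` already
holds for `x = ⌈√(2p)⌉`.
-/

section Triangle

def triangle (t : ℕ) : ℕ := t * (t + 1) / 2

@[simp] lemma triangle_zero : triangle 0 = 0 := rfl

lemma triangle_succ (t : ℕ) : triangle (t + 1) = triangle t + (t + 1) := by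
  unfold triangle
  rw [show (t + 1) * (t + 1 + 1) = t * (t + 1) + (t + 1) * 2 by ring,
    Nat.add_mul_div_right _ _ two_pos]

lemma triangle_mono : Monotone triangle := fun _ _ h =>
  Nat.div_le_div_right (Nat.mul_le_mul h (by omega))

lemma self_le_triangle (t : ℕ) : t ≤ triangle t := by
  induction t with
  | zero => rfl
  | succ t ih => rw [triangle_succ]; omega

lemma triangle_le_triangle_pred_add (t : ℕ) : triangle t ≤ triangle (t - 1) + t := by
  cases t with
  | zero => simp
  | succ t => simp [triangle_succ]

lemma triangle_sub_two_add_le (t : ℕ) : triangle (t - 2) + t ≤ triangle (t - 1) + 1 := by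
  rcases t with _ | _ | t
  · simp
  · simp
  · simp [triangle_succ]; omega

end Triangle

section FibY

lemma fibY_le_iff {m t : ℕ} : fibY m ≤ t ↔ 1 ≤ t ∧ m ≤ triangle t + 1 := by
  have hne : {y : ℕ | 1 ≤ y ∧ m ≤ y * (y + 1) / 2 + 1}.Nonempty :=
    ⟨m + 1, by omega, show m ≤ triangle (m + 1) + 1 by have := self_le_triangle (m + 1); omega⟩
  obtain ⟨hpos, hm⟩ : 1 ≤ fibY m ∧ m ≤ triangle (fibY m) + 1 := Nat.sInf_mem hne
  exact ⟨fun h => ⟨by omega, hm.trans (by gcongr; exact triangle_mono h)⟩, fun h => Nat.sInf_le h⟩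

lemma one_le_fibY (m : ℕ) : 1 ≤ fibY m := (fibY_le_iff.1 le_rfl).1

lemma fibY_mono : Monotone fibY := fun m m' h => by
  obtain ⟨hpos, hm'⟩ := fibY_le_iff.1 (le_refl (fibY m'))
  exact fibY_le_iff.2 ⟨hpos, by omega⟩

lemma fibY_eq_iff {m t : ℕ} (hm : 2 ≤ m) :
    fibY m = t ↔ triangle (t - 1) + 1 < m ∧ m ≤ triangle t + 1 := by
  constructor
  · rintro rfl
    obtain ⟨hpos, hup⟩ := fibY_le_iff.1 (le_refl (fibY m))
    refine ⟨?_, hup⟩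
    by_contra! h
    rcases Nat.lt_or_ge (fibY m) 2 with h1 | h2
    · simp [show fibY m - 1 = 0 by omega] at h
      omega
    · have := fibY_le_iff.2 ⟨by omega, h⟩
      omega
  · rintro ⟨hlow, hup⟩
    have ht : 1 ≤ t := by
      by_contra h0
      simp [show t = 0 by omega] at hlow hup
      omega
    refine le_antisymm (fibY_le_iff.2 ⟨ht, hup⟩) ?_
    by_contra! h
    have := (fibY_le_iff.1 (Nat.le_sub_one_of_lt h)).2
    omega

lemma fibX_eq_fibY (p : ℕ) : fibX p = fibY p := by
  unfold fibX fibY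
  congr 1
  ext y
  constructor <;> rintro ⟨h1, h2⟩ <;> exact ⟨h1, by omega⟩

lemma one_le_fibX (p : ℕ) : 1 ≤ fibX p := fibX_eq_fibY p ▸ one_le_fibY p

lemma fibY_le_fibX {m p : ℕ} (h : m ≤ p) : fibY m ≤ fibX p :=
  fibX_eq_fibY p ▸ fibY_mono h

lemma fibX_le_ceil_sqrt {p : ℕ} (hp : 1 ≤ p) : fibX p ≤ ⌈Real.sqrt (2 * (p : ℝ))⌉₊ := by
  set N := ⌈Real.sqrt (2 * (p : ℝ))⌉₊
  have hN : 1 ≤ N := Nat.one_le_ceil_iff.2 (Real.sqrt_pos.2 (by positivity))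
  have hsq : 2 * p ≤ N * N := by
    have h := Nat.le_ceil (Real.sqrt (2 * (p : ℝ)))
    have := Real.sq_sqrt (by positivity : (0 : ℝ) ≤ 2 * p)
    exact_mod_cast (show (2 * p : ℝ) ≤ N * N by nlinarith [Real.sqrt_nonneg (2 * (p : ℝ))])
  refine Nat.sInf_le ⟨hN, (Nat.le_div_iff_mul_le two_pos).2 ?_⟩
  have : N * N ≤ N * (N + 1) := Nat.mul_le_mul_left _ (by omega)
  omega

end FibY

section Coarse

variable {p i k : ℕ}

lemma fibCoarse_le (p r k : ℕ) : fibCoarse p r k ≤ fibX p + 2 * (k - 1) := by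
  have := one_le_fibY (r - k + 1)
  have := one_le_fibX p
  unfold fibCoarse
  omega

lemma fibCoarse_antitone {r r' : ℕ} (h : r ≤ r') : fibCoarse p r' k ≤ fibCoarse p r k := by
  have := fibY_mono (show r - k + 1 ≤ r' - k + 1 by omega)
  unfold fibCoarse
  omega

lemma fibCoarse_pred_lt (r : ℕ) (hk : 2 ≤ k) : fibCoarse p r (k - 1) < fibCoarse p r k := by
  have := fibY_mono (show r - k + 1 ≤ r - (k - 1) + 1 by omega)
  unfold fibCoarse
  omega

lemma fibCoarse_eq_iff {i' : ℕ} (hi : i - k + 1 ≤ p) (hi' : i' - k + 1 ≤ p) :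
    fibCoarse p i' k = fibCoarse p i k ↔ fibY (i' - k + 1) = fibY (i - k + 1) := by
  have := fibY_le_fibX hi
  have := fibY_le_fibX hi'
  unfold fibCoarse
  omega

lemma fibZ_eq (hk : 1 ≤ k) (hki : k < i) (hip : i ≤ p) :
    fibZ p i k =
      min p (triangle (fibY (i - k + 1)) + k) - (triangle (fibY (i - k + 1) - 1) + k) := by
  generalize ht : fibY (i - k + 1) = t
  have hrows : (Finset.Icc (k + 1) p).filter (fun i' => fibCoarse p i' k = fibCoarse p i k) =
      Finset.Icc (triangle (t - 1) + k + 1) (min p (triangle t + k)) := by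
    ext i'
    simp only [Finset.mem_filter, Finset.mem_Icc, le_min_iff]
    constructor
    · rintro ⟨⟨h1, h2⟩, h3⟩
      have hY := ((fibCoarse_eq_iff (by omega) (by omega)).1 h3).trans ht
      have := (fibY_eq_iff (by omega)).1 hY
      omega
    · rintro ⟨h1, h2, h3⟩
      refine ⟨⟨by omega, h2⟩, (fibCoarse_eq_iff (by omega) (by omega)).2 ?_⟩
      rw [ht, fibY_eq_iff (by omega)]
      omega
  have := (fibY_eq_iff (show 2 ≤ i - k + 1 by omega)).1 ht
  rw [fibZ, hrows, Nat.card_Icc]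
  omega

lemma fibPiv_spec (hk : 1 ≤ k) (hki : k < i) (hip : i ≤ p) :
    triangle (fibY (i - k + 1) - 2) + k ≤ fibPiv p i k ∧
      fibPiv p i k ≤ triangle (fibY (i - k + 1) - 1) + k ∧ fibPiv p i k + fibZ p i k = i := by
  have hz := fibZ_eq hk hki hip
  have hi := (fibY_eq_iff (show 2 ≤ i - k + 1 by omega)).1 rfl
  have := triangle_le_triangle_pred_add (fibY (i - k + 1))
  have := triangle_sub_two_add_le (fibY (i - k + 1))
  unfold fibPiv
  omega

end Coarse

section FibList

lemma pairwise_flatMap_range' {β : Type*} {R : β → β → Prop} {f : ℕ → List β} (s n : ℕ)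
    (hf : ∀ a, (f a).Pairwise R) (hR : ∀ a b, a < b → ∀ x ∈ f a, ∀ y ∈ f b, R x y) :
    ((List.range' s n).flatMap f).Pairwise R :=
  List.pairwise_flatMap.2
    ⟨fun a _ => hf a, (List.pairwise_lt_range' (s := s) (n := n)).imp (hR _ _ ·)⟩

variable {p q : ℕ}

noncomputable def fibEntry (p s i k : ℕ) : List Elim :=
  if k < i ∧ fibCoarse p i k = s then [Elim.mk i (fibPiv p i k) k] else []

lemma fibList_eq (p q : ℕ) : fibList p q = (List.range' 1 (fibX p + 2 * q)).flatMap fun s =>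
    (List.range' 1 p).flatMap fun i => (List.range' 1 (min p q)).flatMap (fibEntry p s i) := by
  simp only [fibList, List.filterMap_eq_flatMap_toList]
  congr! with s - i - k -
  unfold fibEntry
  split_ifs <;> rfl

lemma mem_fibEntry {s i k : ℕ} {e : Elim} :
    e ∈ fibEntry p s i k ↔ k < i ∧ fibCoarse p i k = s ∧ e = Elim.mk i (fibPiv p i k) k := by
  unfold fibEntry
  split_ifs with h
  · simp [h]
  · simp only [List.not_mem_nil, false_iff]
    tauto

lemma of_mem_fibList {i piv k : ℕ} (h : Elim.mk i piv k ∈ fibList p q) :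
    1 ≤ k ∧ k ≤ min p q ∧ k < i ∧ i ≤ p ∧ piv = fibPiv p i k := by
  simp only [fibList_eq, List.mem_flatMap, List.mem_range', mem_fibEntry, Elim.mk.injEq] at h
  obtain ⟨-, -, i, ⟨a, ha, rfl⟩, k, ⟨b, hb, rfl⟩, hki, -, rfl, rfl, rfl⟩ := h
  omega

lemma fibList_pairwise (p q : ℕ) : (fibList p q).Pairwise
    (fun e f => fibCoarse p e.i e.k ≤ fibCoarse p f.i f.k ∧ e ≠ f) := by
  rw [fibList_eq]
  refine pairwise_flatMap_range' _ _ (fun s => pairwise_flatMap_range' _ _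
    (fun i => pairwise_flatMap_range' _ _ (fun k => ?_) ?_) ?_) ?_
  · unfold fibEntry; split_ifs <;> simp
  all_goals
    intro a b hab x hx y hy
    simp only [List.mem_flatMap, mem_fibEntry] at hx hy
    grind

lemma fibCoarse_le_of_before {e f : Elim} (h : Before (fibList p q) e f) :
    fibCoarse p e.i e.k ≤ fibCoarse p f.i f.k ∧ e ≠ f := by
  obtain ⟨a, b, hab, rfl, rfl⟩ := h
  exact List.pairwise_iff_get.1 (fibList_pairwise p q) a b hab

variable {i piv k : ℕ}

lemma fibCoarse_le_fibCoarse_piv (h : Elim.mk i piv k ∈ fibList p q) :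
    fibCoarse p i k ≤ fibCoarse p piv k := by
  obtain ⟨hk, -, hki, hip, rfl⟩ := of_mem_fibList h
  have := fibPiv_spec hk hki hip
  have := (fibY_eq_iff (show 2 ≤ i - k + 1 by omega)).1 rfl
  exact fibCoarse_antitone (by omega)

lemma fibCoarse_piv_pred_lt (h : Elim.mk i piv k ∈ fibList p q) (hk : 2 ≤ k) :
    fibCoarse p piv (k - 1) < fibCoarse p i k := by
  obtain ⟨-, -, hki, hip, rfl⟩ := of_mem_fibList h
  obtain ⟨hlow, -, -⟩ := fibPiv_spec (by omega) hki hip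
  have hY : ¬ fibY (fibPiv p i k - (k - 1) + 1) ≤ fibY (i - k + 1) - 2 := fun h => by
    have := fibY_le_iff.1 h
    omega
  have := fibY_le_fibX (show i - k + 1 ≤ p by omega)
  unfold fibCoarse
  omega

lemma fibCoarse_lt_fibCoarse_piv (h : Elim.mk i piv k ∈ fibList p q) (hpiv : k < piv) :
    fibCoarse p i k < fibCoarse p piv k := by
  obtain ⟨hk, -, hki, hip, rfl⟩ := of_mem_fibList h
  obtain ⟨-, hup, -⟩ := fibPiv_spec hk hki hip
  have hY : fibY (fibPiv p i k - k + 1) ≤ fibY (i - k + 1) - 1 := by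
    refine fibY_le_iff.2 ⟨?_, by omega⟩
    by_contra h
    simp [show fibY (i - k + 1) - 1 = 0 by omega] at hup
    omega
  have := one_le_fibY (i - k + 1)
  have := fibY_le_fibX (show i - k + 1 ≤ p by omega)
  unfold fibCoarse
  omega

/-- Two eliminations of column `k` with a common pivot belong to different coarse steps,
as the pivots of the tiles of one coarse step are distinct. -/
lemma fibCoarse_lt_of_before {i' : ℕ}
    (h : Before (fibList p q) (Elim.mk i piv k) (Elim.mk i' piv k)) :
    fibCoarse p i k < fibCoarse p i' k := by
  obtain ⟨hle, hne⟩ := fibCoarse_le_of_before h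
  obtain ⟨a, b, -, ha, hb⟩ := h
  obtain ⟨hk, -, hki, hip, hpiv⟩ := of_mem_fibList (ha ▸ List.get_mem _ a)
  obtain ⟨-, -, hki', hip', hpiv'⟩ := of_mem_fibList (hb ▸ List.get_mem _ b)
  refine lt_of_le_of_ne hle fun heq => hne ?_
  have hz : fibZ p i k = fibZ p i' k := by simp only [fibZ, heq]
  have := (fibPiv_spec hk hki hip).2.2
  have := (fibPiv_spec hk hki' hip').2.2
  rw [show i = i' by omega]

end FibList

section CriticalPath

lemma add_sum_map_le_of_isChain {α : Type*} {R : α → α → Prop} {S : α → Prop}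
    (w φ : α → ℕ) {B : ℕ} (hR : ∀ a b, S a → S b → R a b → φ a + w b ≤ φ b)
    (hB : ∀ a, S a → φ a ≤ B) :
    ∀ (a : α) (l : List α), (∀ x ∈ a :: l, S x) → (a :: l).IsChain R →
      φ a + (l.map w).sum ≤ B
  | a, [], hS, _ => by simpa using hB a (hS a (by simp))
  | a, b :: l, hS, hchain => by
    rw [List.isChain_cons_cons] at hchain
    have hab := hR a b (hS a (by simp)) (hS b (by simp)) hchain.1
    have hbl := add_sum_map_le_of_isChain w φ hR hB b l
      (fun x hx => hS x (List.mem_cons_of_mem a hx)) hchain.2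
    simp only [List.map_cons, List.sum_cons]
    omega

lemma cpLength_le_of_potential {p q B : ℕ} {L : List Elim} (φ : Task → ℕ)
    (hweight : ∀ t, InTasks p q L t → weight t ≤ φ t)
    (hprec : ∀ u v, InTasks p q L u → InTasks p q L v → Prec L u v → φ u + weight v ≤ φ v)
    (hB : ∀ t, InTasks p q L t → φ t ≤ B) : cpLength p q L ≤ B := by
  refine csSup_le ⟨0, [], ⟨by simp, List.isChain_nil⟩, rfl⟩ ?_
  rintro w ⟨_ | ⟨a, l⟩, ⟨hS, hchain⟩, rfl⟩
  · simp
  · have := add_sum_map_le_of_isChain weight φ hprec hB a l hS hchain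
    have := hweight a (hS a (by simp))
    simp only [List.map_cons, List.sum_cons]
    omega

/-- Bound on the finishing time of a task in the earliest-start schedule of the Fibonacci
algorithm: each coarse step takes the time `6` of a `TTMQR`, and each column adds `10`. -/
noncomputable def fibFinish (p : ℕ) : Task → ℕ
  | .GEQRT r k => if k ≤ 1 then 4 else 6 * fibCoarse p r (k - 1) + 10 * k + 6
  | .UNMQR r k _ => if k ≤ 1 then 10 else 6 * fibCoarse p r (k - 1) + 10 * k + 12
  | .TTQRT i _ k => 6 * fibCoarse p i k + 10 * k + 6
  | .TTMQR i _ k _ => 6 * fibCoarse p i k + 10 * k + 12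

lemma weight_le_fibFinish (p : ℕ) (t : Task) : weight t ≤ fibFinish p t := by
  cases t <;> simp only [fibFinish, weight] <;> (try split_ifs) <;> omega

lemma fibFinish_le {p q : ℕ} {t : Task} (ht : InTasks p q (fibList p q) t) :
    fibFinish p t ≤ 22 * q + 6 * fibX p := by
  cases t with
  | GEQRT r k | UNMQR r k =>
    obtain ⟨hk, hkq, -⟩ := ht
    have := fibCoarse_le p r (k - 1)
    simp only [fibFinish]
    split_ifs <;> omega
  | TTQRT i piv k =>
    obtain ⟨hk, hkq, -⟩ := of_mem_fibList ht
    have := fibCoarse_le p i k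
    simp only [fibFinish]
    omega
  | TTMQR i piv k j =>
    obtain ⟨-, hkj, hjq⟩ := ht
    have := fibCoarse_le p i k
    simp only [fibFinish]
    omega

lemma fibFinish_add_weight_le {p q : ℕ} {u v : Task} (huv : Prec (fibList p q) u v)
    (hu : InTasks p q (fibList p q) u) (hv : InTasks p q (fibList p q) v) :
    fibFinish p u + weight v ≤ fibFinish p v := by
  cases huv with
  | geqrt_unmqr => simp only [fibFinish, weight]; split_ifs <;> omega
  | geqrt_ttqrt_row i piv k | geqrt_ttqrt_piv i piv k =>
    simp only [fibFinish, weight]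
    split_ifs with hk
    · omega
    · have := fibCoarse_pred_lt i (show 2 ≤ k by omega) (p := p)
      have := fibCoarse_piv_pred_lt hv (by omega)
      omega
  | unmqr_ttmqr_row i piv k j | unmqr_ttmqr_piv i piv k j =>
    have := (of_mem_fibList hv.1).1
    simp only [fibFinish, weight]
    split_ifs with hk
    · omega
    · have := fibCoarse_pred_lt i (show 2 ≤ k by omega) (p := p)
      have := fibCoarse_piv_pred_lt hv.1 (by omega)
      omega
  | ttqrt_ttmqr => simp only [fibFinish, weight]; omega
  | ttmqr_geqrt a b i k hk hab =>
    have : fibCoarse p a (k - 1) ≤ fibCoarse p i (k - 1) := by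
      rcases hab with rfl | rfl
      · exact le_rfl
      · exact fibCoarse_le_fibCoarse_piv hu.1
    simp only [fibFinish, weight, if_neg (show ¬ k ≤ 1 by omega)]
    omega
  | ttqrt_serial i i' piv k hbef =>
    have := fibCoarse_lt_of_before hbef
    simp only [fibFinish, weight]
    omega
  | ttmqr_serial i i' piv k j hbef =>
    have := fibCoarse_lt_of_before hbef
    simp only [fibFinish, weight]
    omega
  | ttqrt_pivot_use a i piv k =>
    have := fibCoarse_lt_fibCoarse_piv hu (of_mem_fibList hv).2.2.1
    simp only [fibFinish, weight]
    omega
  | ttmqr_pivot_use a i piv k j =>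
    have := fibCoarse_lt_fibCoarse_piv hu.1 (of_mem_fibList hv.1).2.2.1
    simp only [fibFinish, weight]
    omega

end CriticalPath

/-- **Theorem 2 (2), Fibonacci.** The critical path length of the tiled Fibonacci
algorithm (with TT kernels) on a `p × q` matrix with `p ≥ q ≥ 1` is at most
`22q + 6⌈√(2p)⌉`. -/
theorem fibonacci_cpLength_le (p q : ℕ) (hq : 1 ≤ q) (hpq : q ≤ p) :
    cpLength p q (fibList p q) ≤ 22 * q + 6 * ⌈Real.sqrt (2 * (p : ℝ))⌉₊ := by
  have hx := fibX_le_ceil_sqrt (hq.trans hpq)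
  refine cpLength_le_of_potential (fibFinish p) (fun t _ => weight_le_fibFinish p t)
    (fun u v hu hv huv => fibFinish_add_weight_le huv hu hv) (fun t ht => ?_)
  have := fibFinish_le ht
  omega

end TiledQR
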